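/- arXiv:2105.04410 — 7 statements merged into one kernel-verified Lean document; each statement's English description precedes it below -/
import Mathlib

section
/- Let K₀ > 0, ω₀ > 0 and 0 < f < f_cr, where f_cr = 2·arctan(1/K₀), and set Ω_f^+ = ω₀·√(1/(1 − K₀·tan(f/2))). Then Ω_f^+ > ω₀, b_f(Ω_f^+) = 1, b_f(ω) > 1 for all ω with ω₀ < ω < Ω_f^+, and −1 < b_f(ω) < 1 for all ω > Ω_f^+. -/
/-! Writing `x(ω) = ω² / (ω² - ω₀²)`, the instability parameter is the increasing affine function
`x ↦ K₀ sin f · x - cos f` of `x`, and `x` decreases strictly from `+∞` to `1` on `(ω₀, ∞)`.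
By the half-angle identity `sin f = tan (f/2) (1 + cos f)`, the level `b = 1` is reached exactly
at `x = 1 / (K₀ tan (f/2))`, which is `x(Ω_f^+)`; the level `b = -1` would need `x < 0`. -/

open Real Set

lemma sin_eq_tan_half_mul_one_add_cos {x : ℝ} (hx : cos (x / 2) ≠ 0) :
    sin x = tan (x / 2) * (1 + cos x) := by
  have hx2 : x = 2 * (x / 2) := by ring
  rw [hx2, sin_two_mul, cos_two_mul, ← hx2, tan_eq_sin_div_cos]
  field_simp
  ring

lemma tan_half_pos_and_mul_lt_one {K₀ f : ℝ} (hK₀ : 0 < K₀) (hf : 0 < f)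
    (hfcr : f < 2 * arctan (1 / K₀)) : 0 < tan (f / 2) ∧ K₀ * tan (f / 2) < 1 := by
  have hhalf : f / 2 < arctan (1 / K₀) := by linarith
  have hlt : tan (f / 2) < 1 / K₀ := by
    simpa only [tan_arctan] using
      tan_lt_tan_of_nonneg_of_lt_pi_div_two (by linarith) (arctan_lt_pi_div_two _) hhalf
  refine ⟨tan_pos_of_pos_of_lt_pi_div_two (by linarith)
    (hhalf.trans (arctan_lt_pi_div_two _)), ?_⟩
  rwa [lt_div_iff₀ hK₀, mul_comm] at hlt

lemma sq_div_sq_sub_sq_strictAntiOn {ω₀ : ℝ} (hω₀ : 0 < ω₀) :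
    StrictAntiOn (fun ω : ℝ => ω ^ 2 / (ω ^ 2 - ω₀ ^ 2)) (Ioi ω₀) := by
  intro ω₁ h₁ ω₂ h₂ h₁₂
  have hsq₁ : ω₀ ^ 2 < ω₁ ^ 2 := pow_lt_pow_left₀ h₁ hω₀.le two_ne_zero
  have hsq₁₂ : ω₁ ^ 2 < ω₂ ^ 2 := pow_lt_pow_left₀ h₁₂ (hω₀.trans h₁).le two_ne_zero
  have hrw : ∀ ω : ℝ, ω₀ ^ 2 < ω ^ 2 → ω ^ 2 / (ω ^ 2 - ω₀ ^ 2) = 1 + ω₀ ^ 2 / (ω ^ 2 - ω₀ ^ 2) :=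
    fun ω hω => by field_simp [(sub_pos.2 hω).ne']; ring
  simp only [hrw _ hsq₁, hrw _ (hsq₁.trans hsq₁₂), add_lt_add_iff_left]
  gcongr

lemma sq_div_sq_sub_sq_of_eq_mul_sqrt {ω₀ a Ω : ℝ} (hω₀ : 0 < ω₀) (ha : 0 < a) (ha1 : a < 1)
    (hΩ : Ω = ω₀ * √(1 / (1 - a))) :
    ω₀ < Ω ∧ Ω ^ 2 / (Ω ^ 2 - ω₀ ^ 2) = 1 / a := by
  have h1a : 0 < 1 - a := sub_pos.2 ha1
  have hsq : Ω ^ 2 = ω₀ ^ 2 / (1 - a) := by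
    rw [hΩ, mul_pow, sq_sqrt (by positivity)]
    ring
  have hlt : ω₀ ^ 2 < Ω ^ 2 := by
    rw [hsq, lt_div_iff₀ h1a]
    nlinarith [pow_pos hω₀ 2]
  refine ⟨lt_of_pow_lt_pow_left₀ 2 (by rw [hΩ]; positivity) hlt, ?_⟩
  rw [hsq]
  field_simp [ha.ne']
  ring

/-- **The upper instability-frequency boundary `Ω_f^+`.**
Let `K₀ > 0`, `ω₀ > 0` and `0 < f < f_cr = 2 arctan (1/K₀)`, and set
`Ω_f^+ = ω₀ √(1/(1 - K₀ tan (f/2)))`.  Then `Ω_f^+ > ω₀`, `b_f(Ω_f^+) = 1`,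
`b_f(ω) > 1` for `ω₀ < ω < Ω_f^+`, and `-1 < b_f(ω) < 1` for `ω > Ω_f^+`, where
`b_f(ω) = K₀ * (ω²/(ω² - ω₀²)) * sin f - cos f`. -/
theorem instability_upper_boundary
    (K₀ ω₀ : ℝ) (hK₀ : 0 < K₀) (hω₀ : 0 < ω₀)
    (f : ℝ) (hf : 0 < f) (hfcr : f < 2 * Real.arctan (1 / K₀))
    (b : ℝ → ℝ)
    (hb : ∀ ω, b ω = K₀ * (ω ^ 2 / (ω ^ 2 - ω₀ ^ 2)) * Real.sin f - Real.cos f)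
    (Ωp : ℝ) (hΩp : Ωp = ω₀ * Real.sqrt (1 / (1 - K₀ * Real.tan (f / 2)))) :
    ω₀ < Ωp ∧
    b Ωp = 1 ∧
    (∀ ω : ℝ, ω₀ < ω → ω < Ωp → b ω > 1) ∧
    (∀ ω : ℝ, Ωp < ω → -1 < b ω ∧ b ω < 1) := by
  set x : ℝ → ℝ := fun ω => ω ^ 2 / (ω ^ 2 - ω₀ ^ 2)
  obtain ⟨ht, hKt⟩ := tan_half_pos_and_mul_lt_one hK₀ hf hfcr
  obtain ⟨hω₀Ωp, hxΩp⟩ := sq_div_sq_sub_sq_of_eq_mul_sqrt hω₀ (mul_pos hK₀ ht) hKt hΩp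
  have hfπ : f < π := by linarith [arctan_lt_pi_div_two (1 / K₀)]
  have hsin : 0 < sin f := sin_pos_of_pos_of_lt_pi hf hfπ
  have hsin_eq : sin f = tan (f / 2) * (1 + cos f) :=
    sin_eq_tan_half_mul_one_add_cos (cos_pos_of_mem_Ioo ⟨by linarith, by linarith⟩).ne'
  have hb_x : ∀ ω, b ω = K₀ * sin f * x ω - cos f := fun ω => by rw [hb]; ring
  have hbΩp : b Ωp = 1 := by
    rw [hb_x, show x Ωp = _ from hxΩp, hsin_eq]
    field_simp
    ring
  have hanti := sq_div_sq_sub_sq_strictAntiOn hω₀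
  refine ⟨hω₀Ωp, hbΩp, fun ω hω hωΩ => ?_, fun ω hΩω => ⟨?_, ?_⟩⟩
  · have : x Ωp < x ω := hanti hω hω₀Ωp hωΩ
    rw [← hbΩp, hb_x, hb_x]
    gcongr
  · have hω : ω₀ < ω := hω₀Ωp.trans hΩω
    have hxω : 0 < x ω :=
      div_pos (pow_pos (hω₀.trans hω) 2) (sub_pos.2 (pow_lt_pow_left₀ hω hω₀.le two_ne_zero))
    rw [hb_x]
    linarith [cos_le_one f, mul_pos (mul_pos hK₀ hsin) hxω]
  · have : x ω < x Ωp := hanti hω₀Ωp (hω₀Ωp.trans hΩω) hΩω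
    rw [← hbΩp, hb_x, hb_x]
    gcongr
end

section
/- Let K₀ > 0, ω₀ > 0 and 0 < f < π, and set Ω_f^− = ω₀·√(tan(f/2)/(tan(f/2) + K₀)). Then Ω_f^− < ω₀, b_f(Ω_f^−) = −1, −1 < b_f(ω) < 1 for all ω with 0 < ω < Ω_f^−, and b_f(ω) < −1 for all ω with Ω_f^− < ω < ω₀. -/
/-!
By the half-angle formulas, `a sin f - cos f + 1 = sin f (a + tan (f/2))`, so with
`t = tan (f/2)` we get `b_f(ω) + 1 = sin f (K₀ ω²/(ω² - ω₀²) + t)`. The choice of `Ω_f^-` is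
exactly the one for which `K₀ ω²/(ω² - ω₀²) + t = (t + K₀)(Ω² - ω²)/(ω₀² - ω²)`, so on
`(0, ω₀)` the sign of `b_f + 1` is that of `Ω² - ω²`. The bound `b_f < 1` holds on all of
`(0, ω₀)` because there `ω²/(ω² - ω₀²) < 0`.
-/

open Real

lemma Real.mul_sin_sub_cos_add_one_eq (a x : ℝ) (hx : cos x ≠ -1) :
    a * sin x - cos x + 1 = sin x * (a + tan (x / 2)) := by
  have : 1 + tan (x / 2) ^ 2 ≠ 0 := by positivity
  rw [sin_eq_two_mul_tan_half_div_one_add_tan_half_sq,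
    cos_eq_two_mul_tan_half_div_one_sub_tan_half_sq x hx]
  field_simp
  ring

lemma Real.mul_sin_sub_cos_lt_one {a x : ℝ} (ha : a ≤ 0) (hsin : 0 ≤ sin x) (hx : cos x ≠ -1) :
    a * sin x - cos x < 1 := by
  have : -1 < cos x := (neg_one_le_cos x).lt_of_ne hx.symm
  nlinarith [mul_nonpos_of_nonpos_of_nonneg ha hsin]

lemma Real.cos_ne_neg_one_of_pos_of_lt_pi {x : ℝ} (hx : 0 < x) (hxπ : x < π) : cos x ≠ -1 := by
  have := cos_lt_cos_of_nonneg_of_le_pi hx.le le_rfl hxπ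
  rw [cos_pi] at this
  exact this.ne'

section LowerBoundary

variable {K t ω₀ : ℝ}

lemma mul_sqrt_div_add_sq_mul (ht : 0 ≤ t) (hK : 0 < K) :
    (ω₀ * √(t / (t + K))) ^ 2 * (t + K) = ω₀ ^ 2 * t := by
  rw [mul_pow, sq_sqrt (by positivity)]
  field_simp

lemma mul_sqrt_div_add_lt (ht : 0 ≤ t) (hK : 0 < K) (hω₀ : 0 < ω₀) :
    ω₀ * √(t / (t + K)) < ω₀ := by
  refine mul_lt_of_lt_one_right hω₀ ((sqrt_lt' one_pos).2 ?_)
  rw [one_pow, div_lt_one (by positivity)]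
  linarith

lemma mul_sq_div_sq_sub_sq_add_eq {ω Ω : ℝ} (hω : ω ^ 2 ≠ ω₀ ^ 2)
    (hΩ : Ω ^ 2 * (t + K) = ω₀ ^ 2 * t) :
    K * (ω ^ 2 / (ω ^ 2 - ω₀ ^ 2)) + t = (t + K) / (ω₀ ^ 2 - ω ^ 2) * (Ω ^ 2 - ω ^ 2) := by
  have : ω₀ ^ 2 - ω ^ 2 ≠ 0 := sub_ne_zero.2 hω.symm
  rw [← neg_sub (ω₀ ^ 2), div_neg]
  field_simp
  linear_combination -hΩ

end LowerBoundary

/-- **The lower instability-frequency boundary `Ω_f^-`.**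
Let `K₀ > 0`, `ω₀ > 0` and `0 < f < π`, and set
`Ω_f^- = ω₀ √(tan(f/2)/(tan(f/2) + K₀))`.  Then `Ω_f^- < ω₀`, `b_f(Ω_f^-) = -1`,
`-1 < b_f(ω) < 1` for `0 < ω < Ω_f^-`, and `b_f(ω) < -1` for `Ω_f^- < ω < ω₀`, where
`b_f(ω) = K₀ * (ω²/(ω² - ω₀²)) * sin f - cos f`. -/
theorem instability_lower_boundary
    (K₀ ω₀ : ℝ) (hK₀ : 0 < K₀) (hω₀ : 0 < ω₀)
    (f : ℝ) (hf : 0 < f) (hfπ : f < Real.pi)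
    (b : ℝ → ℝ)
    (hb : ∀ ω, b ω = K₀ * (ω ^ 2 / (ω ^ 2 - ω₀ ^ 2)) * Real.sin f - Real.cos f)
    (Ωm : ℝ) (hΩm : Ωm = ω₀ * Real.sqrt (Real.tan (f / 2) / (Real.tan (f / 2) + K₀))) :
    Ωm < ω₀ ∧
    b Ωm = -1 ∧
    (∀ ω : ℝ, 0 < ω → ω < Ωm → -1 < b ω ∧ b ω < 1) ∧
    (∀ ω : ℝ, Ωm < ω → ω < ω₀ → b ω < -1) := by
  set t := tan (f / 2)
  have hsin : 0 < sin f := sin_pos_of_pos_of_lt_pi hf hfπ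
  have hcos : cos f ≠ -1 := cos_ne_neg_one_of_pos_of_lt_pi hf hfπ
  have ht : 0 < t := tan_pos_of_pos_of_lt_pi_div_two (by linarith) (by linarith)
  have hΩsq : Ωm ^ 2 * (t + K₀) = ω₀ ^ 2 * t := hΩm ▸ mul_sqrt_div_add_sq_mul ht.le hK₀
  have hΩlt : Ωm < ω₀ := hΩm ▸ mul_sqrt_div_add_lt ht.le hK₀ hω₀
  have hΩ0 : 0 ≤ Ωm := hΩm ▸ by positivity
  have hgap {ω : ℝ} (h0 : 0 ≤ ω) (hlt : ω < ω₀) : 0 < ω₀ ^ 2 - ω ^ 2 := by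
    rw [sub_pos]; gcongr
  have hb_add_one {ω : ℝ} (h0 : 0 ≤ ω) (hlt : ω < ω₀) :
      ∃ c > 0, b ω + 1 = c * (Ωm ^ 2 - ω ^ 2) := by
    refine ⟨sin f * ((t + K₀) / (ω₀ ^ 2 - ω ^ 2)), by have := hgap h0 hlt; positivity, ?_⟩
    rw [hb, mul_sin_sub_cos_add_one_eq _ _ hcos,
      mul_sq_div_sq_sub_sq_add_eq (sub_pos.1 (hgap h0 hlt)).ne hΩsq, mul_assoc]
  have hb_lt_one {ω : ℝ} (h0 : 0 ≤ ω) (hlt : ω < ω₀) : b ω < 1 := by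
    rw [hb]
    refine mul_sin_sub_cos_lt_one (mul_nonpos_of_nonneg_of_nonpos hK₀.le ?_) hsin.le hcos
    exact div_nonpos_of_nonneg_of_nonpos (sq_nonneg ω) (by linarith [hgap h0 hlt])
  refine ⟨hΩlt, ?_, fun ω h0 hlt ↦ ⟨?_, hb_lt_one h0.le (hlt.trans hΩlt)⟩, fun ω hgt hlt ↦ ?_⟩
  · obtain ⟨c, -, hc⟩ := hb_add_one hΩ0 hΩlt
    rw [sub_self, mul_zero] at hc
    linarith
  · obtain ⟨c, hc0, hc⟩ := hb_add_one h0.le (hlt.trans hΩlt)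
    have : ω ^ 2 < Ωm ^ 2 := by gcongr
    nlinarith
  · obtain ⟨c, hc0, hc⟩ := hb_add_one (hΩ0.trans hgt.le) hlt
    have : Ωm ^ 2 < ω ^ 2 := by gcongr
    nlinarith
end

section
/- Let K₀ > 0, ω₀ > 0 and f_cr ≤ f < π, where f_cr = 2·arctan(1/K₀). Then for every ω > ω₀ one has b_f(ω) > K₀·sin f − cos f ≥ 1; in particular b_f(ω) > 1 for all ω > ω₀. -/
/-!
Writing `f = 2t`, the double-angle formulas give
`K sin f - cos f - 1 = 2 cos t (K sin t - cos t)`. For `arctan (1/K) ≤ t < π/2` both factors are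
nonnegative, the second because `tan t ≥ 1/K`; this is the bound `K sin f - cos f ≥ 1`.
Above resonance the factor `ω²/(ω² - ω₀²)` exceeds `1`, and `sin f > 0`, so it only increases `b_f`.
-/

open Real

lemma one_lt_sq_div_sq_sub_sq {a b : ℝ} (hb : 0 < b) (hba : b < a) :
    1 < a ^ 2 / (a ^ 2 - b ^ 2) := by
  have hpos : 0 < a ^ 2 - b ^ 2 := by nlinarith
  rw [lt_div_iff₀ hpos]
  nlinarith

lemma mul_sin_two_mul_sub_cos_two_mul_sub_one (K x : ℝ) :
    K * sin (2 * x) - cos (2 * x) - 1 = 2 * cos x * (K * sin x - cos x) := by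
  rw [sin_two_mul, cos_two_mul]
  ring

lemma cos_le_mul_sin_of_arctan_inv_le {K t : ℝ} (hK : 0 < K) (ht : arctan (1 / K) ≤ t)
    (htπ : t < π / 2) : cos t ≤ K * sin t := by
  have hcos : 0 < cos t :=
    cos_pos_of_mem_Ioo ⟨(neg_pi_div_two_lt_arctan _).trans_le ht, htπ⟩
  have htan : 1 / K ≤ tan t := by
    rw [← arctan_le_arctan_iff, arctan_tan ((neg_pi_div_two_lt_arctan _).trans_le ht) htπ]
    exact ht
  rw [tan_eq_sin_div_cos, div_le_div_iff₀ hK hcos] at htan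
  linarith

lemma one_le_mul_sin_sub_cos {K f : ℝ} (hK : 0 < K) (hf : 2 * arctan (1 / K) ≤ f)
    (hfπ : f < π) : 1 ≤ K * sin f - cos f := by
  have hcos : 0 ≤ cos (f / 2) :=
    cos_nonneg_of_mem_Icc ⟨by linarith [neg_pi_div_two_lt_arctan (1 / K)], by linarith⟩
  have hlin : 0 ≤ K * sin (f / 2) - cos (f / 2) := by
    linarith [cos_le_mul_sin_of_arctan_inv_le (t := f / 2) hK (by linarith) (by linarith)]
  have hid := mul_sin_two_mul_sub_cos_two_mul_sub_one K (f / 2)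
  rw [mul_div_cancel₀ f two_ne_zero] at hid
  linarith [mul_nonneg (mul_nonneg zero_le_two hcos) hlin]

/-- **Instability for all frequencies above resonance when `f ≥ f_cr`.**
Let `K₀ > 0`, `ω₀ > 0` and `f_cr ≤ f < π` where `f_cr = 2 arctan (1/K₀)`.  Then for
every `ω > ω₀` one has `b_f(ω) > K₀ sin f - cos f ≥ 1`, where
`b_f(ω) = K₀ * (ω²/(ω² - ω₀²)) * sin f - cos f`; in particular `b_f(ω) > 1`. -/
theorem instability_above_critical_period
    (K₀ ω₀ : ℝ) (hK₀ : 0 < K₀) (hω₀ : 0 < ω₀)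
    (f : ℝ) (hf : 2 * Real.arctan (1 / K₀) ≤ f) (hfπ : f < Real.pi) :
    ∀ ω : ℝ, ω₀ < ω →
      (K₀ * (ω ^ 2 / (ω ^ 2 - ω₀ ^ 2)) * Real.sin f - Real.cos f >
          K₀ * Real.sin f - Real.cos f) ∧
      K₀ * Real.sin f - Real.cos f ≥ 1 ∧
      K₀ * (ω ^ 2 / (ω ^ 2 - ω₀ ^ 2)) * Real.sin f - Real.cos f > 1 := by
  intro ω hω
  have hsin : 0 < sin f :=
    sin_pos_of_pos_of_lt_pi (by linarith [arctan_pos.2 (one_div_pos.2 hK₀)]) hfπ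
  have hgain := mul_lt_mul_of_pos_left (one_lt_sq_div_sq_sub_sq hω₀ hω) (mul_pos hK₀ hsin)
  have hone := one_le_mul_sin_sub_cos hK₀ hf hfπ
  exact ⟨by linarith, hone, by linarith⟩
end

section
/- Let K₀ > 0, ω₀ > 0 and 0 < f < π, and set Ω_f^− = ω₀·√(tan(f/2)/(tan(f/2) + K₀)) and, when 0 < f < f_cr = 2·arctan(1/K₀), Ω_f^+ = ω₀·√(1/(1 − K₀·tan(f/2))). Then for every ω > 0 with ω ≠ ω₀: if 0 < f < f_cr, |b_f(ω)| > 1 holds if and only if Ω_f^− < ω < Ω_f^+; and if f_cr ≤ f < π, |b_f(ω)| > 1 holds if and only if ω > Ω_f^−. -/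
/-!
Write `t = tan (f / 2) > 0`. The half-angle formulas make `b_f(ω)` rational in `t` and `ω²`, and
`b_f(ω)² - 1` is a positive factor times `P · Q` with `P = ω₀² - (1 - K₀ t) ω²` and
`Q = (K₀ + t) ω² - t ω₀²`. Since `t P + Q = K₀ (1 + t²) ω² > 0`, the two cannot both be negative,
so `|b_f(ω)| > 1` iff `P > 0` and `Q > 0`. Now `Q > 0` iff `ω > Ω_f^-`, while `P > 0` iff
`ω < Ω_f^+` when `K₀ t < 1`, i.e. `f < f_cr`, and holds for every `ω` otherwise.
-/

open Real

theorem Real.lt_arctan_iff_tan_lt {x y : ℝ} (hx₁ : -(π / 2) < x) (hx₂ : x < π / 2) :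
    x < arctan y ↔ tan x < y := by
  rw [← arctan_lt_arctan_iff (x := tan x), arctan_tan hx₁ hx₂]

theorem Real.mul_sqrt_lt_iff {a c y : ℝ} (ha : 0 ≤ a) (hy : 0 < y) :
    a * √c < y ↔ a ^ 2 * c < y ^ 2 := by
  rw [← sqrt_lt' hy, sqrt_mul (sq_nonneg a), sqrt_sq ha]

theorem Real.lt_mul_sqrt_iff {a c y : ℝ} (ha : 0 ≤ a) (hy : 0 ≤ y) :
    y < a * √c ↔ y ^ 2 < a ^ 2 * c := by
  rw [← lt_sqrt hy, sqrt_mul (sq_nonneg a), sqrt_sq ha]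

theorem mul_pos_iff_of_mul_add_pos {α : Type*} [CommRing α] [LinearOrder α] [IsStrictOrderedRing α]
    {s p q : α} (hs : 0 < s) (h : 0 < s * p + q) :
    0 < p * q ↔ 0 < p ∧ 0 < q := by
  refine ⟨fun hpq => ?_, fun ⟨hp, hq⟩ => mul_pos hp hq⟩
  rcases pos_and_pos_or_neg_and_neg_of_mul_pos hpq with h_pos | ⟨hp, hq⟩
  · exact h_pos
  · nlinarith

section Instability

variable {K t x x₀ : ℝ}

theorem instability_sq_sub_one (hx : x ≠ x₀) :
    (K * (x / (x - x₀)) * (2 * t / (1 + t ^ 2)) - (1 - t ^ 2) / (1 + t ^ 2)) ^ 2 - 1 =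
      4 * t / ((1 + t ^ 2) ^ 2 * (x - x₀) ^ 2) *
        ((x₀ - (1 - K * t) * x) * ((K + t) * x - t * x₀)) := by
  have : x - x₀ ≠ 0 := sub_ne_zero.2 hx
  field_simp
  ring

theorem one_lt_abs_instability_iff (hK : 0 < K) (ht : 0 < t) (hx : 0 < x) (hxx₀ : x ≠ x₀) :
    1 < |K * (x / (x - x₀)) * (2 * t / (1 + t ^ 2)) - (1 - t ^ 2) / (1 + t ^ 2)| ↔
      0 < x₀ - (1 - K * t) * x ∧ 0 < (K + t) * x - t * x₀ := by
  rw [← one_lt_sq_iff_one_lt_abs, ← sub_pos, instability_sq_sub_one hxx₀,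
    mul_pos_iff_of_pos_left (by positivity)]
  refine mul_pos_iff_of_mul_add_pos ht ?_
  have hsum : t * (x₀ - (1 - K * t) * x) + ((K + t) * x - t * x₀) = K * (1 + t ^ 2) * x := by ring
  rw [hsum]
  positivity

end Instability

theorem lower_threshold_lt_iff {a t K y : ℝ} (ha : 0 ≤ a) (ht : 0 ≤ t) (hK : 0 < K) (hy : 0 < y) :
    a * √(t / (t + K)) < y ↔ 0 < (K + t) * y ^ 2 - t * a ^ 2 := by
  rw [mul_sqrt_lt_iff ha hy, mul_div_assoc', div_lt_iff₀ (by positivity), sub_pos, add_comm K]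
  constructor <;> intro h <;> linarith

theorem lt_upper_threshold_iff {a u y : ℝ} (ha : 0 ≤ a) (hu : 0 < u) (hy : 0 ≤ y) :
    y < a * √(1 / u) ↔ 0 < a ^ 2 - u * y ^ 2 := by
  rw [lt_mul_sqrt_iff ha hy, mul_one_div, lt_div_iff₀ hu, sub_pos, mul_comm]

/-- **Characterization of the instability frequencies.**
Let `K₀ > 0`, `ω₀ > 0`, `0 < f < π`, `f_cr = 2 arctan (1/K₀)`,
`Ω_f^- = ω₀ √(tan(f/2)/(tan(f/2) + K₀))` and, for `0 < f < f_cr`,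
`Ω_f^+ = ω₀ √(1/(1 - K₀ tan(f/2)))`.  Then for every `ω > 0` with `ω ≠ ω₀`:
if `f < f_cr`, then `|b_f(ω)| > 1 ↔ Ω_f^- < ω < Ω_f^+`; and if `f_cr ≤ f`, then
`|b_f(ω)| > 1 ↔ ω > Ω_f^-`, where `b_f(ω) = K₀ (ω²/(ω² - ω₀²)) sin f - cos f`. -/
theorem instability_frequency_characterization
    (K₀ ω₀ : ℝ) (hK₀ : 0 < K₀) (hω₀ : 0 < ω₀)
    (f : ℝ) (hf : 0 < f) (hfπ : f < Real.pi)
    (b : ℝ → ℝ)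
    (hb : ∀ ω, b ω = K₀ * (ω ^ 2 / (ω ^ 2 - ω₀ ^ 2)) * Real.sin f - Real.cos f)
    (Ωm Ωp : ℝ)
    (hΩm : Ωm = ω₀ * Real.sqrt (Real.tan (f / 2) / (Real.tan (f / 2) + K₀)))
    (hΩp : Ωp = ω₀ * Real.sqrt (1 / (1 - K₀ * Real.tan (f / 2)))) :
    ∀ ω : ℝ, 0 < ω → ω ≠ ω₀ →
      ((f < 2 * Real.arctan (1 / K₀) → (|b ω| > 1 ↔ Ωm < ω ∧ ω < Ωp)) ∧
       (2 * Real.arctan (1 / K₀) ≤ f → (|b ω| > 1 ↔ Ωm < ω))) := by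
  intro ω hω hne
  have ht : 0 < tan (f / 2) := tan_pos_of_pos_of_lt_pi_div_two (by linarith) (by linarith)
  have hcos : cos f ≠ -1 := by
    rw [← cos_pi]
    exact (cos_lt_cos_of_nonneg_of_le_pi hf.le le_rfl hfπ).ne'
  have hcrit : f < 2 * arctan (1 / K₀) ↔ K₀ * tan (f / 2) < 1 := by
    rw [← div_lt_iff₀' two_pos, lt_arctan_iff_tan_lt (by linarith) (by linarith),
      lt_div_iff₀ hK₀, mul_comm]
  have hsq : ω ^ 2 ≠ ω₀ ^ 2 := (pow_left_inj₀ hω.le hω₀.le two_ne_zero).not.2 hne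
  have hb' : |b ω| > 1 ↔ 0 < ω₀ ^ 2 - (1 - K₀ * tan (f / 2)) * ω ^ 2 ∧
      0 < (K₀ + tan (f / 2)) * ω ^ 2 - tan (f / 2) * ω₀ ^ 2 := by
    rw [hb, sin_eq_two_mul_tan_half_div_one_add_tan_half_sq,
      cos_eq_two_mul_tan_half_div_one_sub_tan_half_sq f hcos]
    exact one_lt_abs_instability_iff hK₀ ht (by positivity) hsq
  rw [hb', hΩm, lower_threshold_lt_iff hω₀.le ht.le hK₀ hω]
  refine ⟨fun hf_lt => ?_, fun hf_ge => ?_⟩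
  · rw [hΩp, lt_upper_threshold_iff hω₀.le (sub_pos.2 (hcrit.1 hf_lt)) hω.le, and_comm]
  · have hKt : 1 ≤ K₀ * tan (f / 2) := not_lt.1 (hcrit.not.1 (not_lt.2 hf_ge))
    refine and_iff_right ?_
    nlinarith
end

section
/- Let ω, f, B be real with 0 < f < π, set sinc f = sin f/f and b_f = (B/2)·sinc f − cos f, and let T be the 2×2 complex monodromy matrix T = e^{iω}·[[cos f − iω·sinc f, sinc f], [ω²·sinc f + 2iω(cos f + b_f) − (2·b_f·cos f + cos² f + 1)/sinc f, iω·sinc f − cos f − 2·b_f]]. Then the characteristic polynomial of T is det(s·I − T) = s² + 2·b_f·e^{iω}·s + e^{2iω}; in particular, a complex number s is an eigenvalue (Floquet multiplier) of T if and only if s² + 2·b_f·e^{iω}·s + e^{2iω} = 0. -/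
/-!
Factor `T = e^{iω} M`. The matrix `M` has trace `-2 b_f` and, because the `1 / sinc f` term in
its lower-left entry is exactly what cancels the rest of `det M`, determinant `1`. A `2 × 2`
matrix has characteristic polynomial `s² - (tr T) s + det T`, and its eigenvalues are the roots
of that polynomial.
-/

open Complex

namespace Matrix

theorem det_smul_one_sub_fin_two {R : Type*} [CommRing R] (M : Matrix (Fin 2) (Fin 2) R) (s : R) :
    det (s • 1 - M) = s ^ 2 - M.trace * s + M.det := by
  nontriviality R
  simpa [charpoly_fin_two, smul_one_eq_diagonal] using (M.eval_charpoly s).symm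

theorem exists_mulVec_eq_smul_iff_det_smul_one_sub {n K : Type*} [Fintype n] [DecidableEq n]
    [Field K] (M : Matrix n n K) (s : K) :
    (∃ v : n → K, v ≠ 0 ∧ M *ᵥ v = s • v) ↔ det (s • 1 - M) = 0 := by
  simp_rw [← exists_mulVec_eq_zero_iff, sub_mulVec, smul_mulVec, one_mulVec, sub_eq_zero, eq_comm]

end Matrix

/-- `T = e^{iω} • mckReducedMonodromy ω (cos f) (sinc f) b_f`. -/
noncomputable def mckReducedMonodromy (ω c σ b : ℂ) : Matrix (Fin 2) (Fin 2) ℂ :=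
  !![c - I * ω * σ, σ;
     ω ^ 2 * σ + 2 * I * ω * (c + b) - (2 * b * c + c ^ 2 + 1) / σ, I * ω * σ - c - 2 * b]

theorem trace_mckReducedMonodromy (ω c σ b : ℂ) :
    (mckReducedMonodromy ω c σ b).trace = -2 * b := by
  rw [mckReducedMonodromy, Matrix.trace_fin_two_of]
  ring

theorem det_mckReducedMonodromy (ω c σ b : ℂ) (hσ : σ ≠ 0) :
    (mckReducedMonodromy ω c σ b).det = 1 := by
  rw [mckReducedMonodromy, Matrix.det_fin_two_of]
  field_simp
  linear_combination (-σ ^ 2 * ω ^ 2) * I_sq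

theorem mck_monodromy_charpoly_general (ω f : ℝ) (hf : 0 < f) (hfπ : f < Real.pi)
    (sincf bf : ℝ)
    (hsinc : sincf = Real.sin f / f)
    (T : Matrix (Fin 2) (Fin 2) ℂ)
    (hT : T = Complex.exp (Complex.I * ω) •
      !![(Real.cos f : ℂ) - Complex.I * ω * sincf,
         (sincf : ℂ);
         (ω : ℂ) ^ 2 * sincf + 2 * Complex.I * ω * ((Real.cos f : ℂ) + bf) -
           (2 * bf * Real.cos f + Real.cos f ^ 2 + 1) / (sincf : ℂ),
         Complex.I * ω * sincf - Real.cos f - 2 * bf]) :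
    (∀ s : ℂ,
      Matrix.det (s • (1 : Matrix (Fin 2) (Fin 2) ℂ) - T) =
        s ^ 2 + 2 * (bf : ℂ) * Complex.exp (Complex.I * ω) * s +
          Complex.exp (2 * Complex.I * ω)) ∧
    (∀ s : ℂ,
      (∃ v : Fin 2 → ℂ, v ≠ 0 ∧ T.mulVec v = s • v) ↔
        s ^ 2 + 2 * (bf : ℂ) * Complex.exp (Complex.I * ω) * s +
          Complex.exp (2 * Complex.I * ω) = 0) := by
  have hsinc_ne : (sincf : ℂ) ≠ 0 := by
    rw [hsinc, ofReal_ne_zero]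
    exact (div_pos (Real.sin_pos_of_pos_of_lt_pi hf hfπ) hf).ne'
  have hexp : exp (2 * I * ω) = exp (I * ω) ^ 2 := by
    rw [← exp_nat_mul]
    ring_nf
  have hdet (s : ℂ) : Matrix.det (s • (1 : Matrix (Fin 2) (Fin 2) ℂ) - T) =
      s ^ 2 + 2 * (bf : ℂ) * exp (I * ω) * s + exp (2 * I * ω) := by
    rw [Matrix.det_smul_one_sub_fin_two, hT, ← mckReducedMonodromy, Matrix.trace_smul,
      Matrix.det_smul, trace_mckReducedMonodromy, det_mckReducedMonodromy _ _ _ _ hsinc_ne, hexp]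
    simp only [Fintype.card_fin, smul_eq_mul]
    ring
  exact ⟨hdet, fun s => by rw [← hdet, T.exists_mulVec_eq_smul_iff_det_smul_one_sub]⟩

/-- **Characteristic polynomial of the MCK monodromy matrix.**
Let `0 < f < π`, `sinc f = sin f / f`, `b_f = (B/2) sinc f - cos f`, and let `T` be the
MCK monodromy matrix.  Then `det (s • I - T) = s² + 2 b_f e^{iω} s + e^{2iω}`; in
particular `s` is an eigenvalue (Floquet multiplier) of `T` iff
`s² + 2 b_f e^{iω} s + e^{2iω} = 0`. -/
theorem mck_monodromy_charpoly (ω f B : ℝ) (hf : 0 < f) (hfπ : f < Real.pi)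
    (sincf bf : ℝ)
    (hsinc : sincf = Real.sin f / f)
    (hbf : bf = B / 2 * sincf - Real.cos f)
    (T : Matrix (Fin 2) (Fin 2) ℂ)
    (hT : T = Complex.exp (Complex.I * ω) •
      !![(Real.cos f : ℂ) - Complex.I * ω * sincf,
         (sincf : ℂ);
         (ω : ℂ) ^ 2 * sincf + 2 * Complex.I * ω * ((Real.cos f : ℂ) + bf) -
           (2 * bf * Real.cos f + Real.cos f ^ 2 + 1) / (sincf : ℂ),
         Complex.I * ω * sincf - Real.cos f - 2 * bf]) :
    (∀ s : ℂ,
      Matrix.det (s • (1 : Matrix (Fin 2) (Fin 2) ℂ) - T) =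
        s ^ 2 + 2 * (bf : ℂ) * Complex.exp (Complex.I * ω) * s +
          Complex.exp (2 * Complex.I * ω)) ∧
    (∀ s : ℂ,
      (∃ v : Fin 2 → ℂ, v ≠ 0 ∧ T.mulVec v = s • v) ↔
        s ^ 2 + 2 * (bf : ℂ) * Complex.exp (Complex.I * ω) * s +
          Complex.exp (2 * Complex.I * ω) = 0) :=
  mck_monodromy_charpoly_general ω f hf hfπ sincf bf hsinc T hT
end

section
/- Let ω be real and f > 0 real, and let C_B be the 2×2 complex matrix C_B = [[0, 1], [ω² − f², 2iω]]. Then for every complex z, the matrix exponential of z·C_B equals exp(z·C_B) = (e^{iωz}/f)·[[f·cos(fz) − iω·sin(fz), sin(fz)], [(ω² − f²)·sin(fz), f·cos(fz) + iω·sin(fz)]]. -/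
/-!
Write `C_B = iω • 1 + N` with `N = [[-iω, 1], [ω² - f², iω]]`, the trace-free part of `C_B`,
for which `N² = -f² • 1`. Hence the even and odd parts of the exponential series of `z • N` are
the series of `cos (f z) • 1` and `(sin (f z) / f) • N`, and the commuting scalar part `iωz • 1`
contributes the factor `e^{iωz}`.
-/

open Complex

theorem NormedSpace.exp_smul_of_sq_eq_neg_sq_smul_one {𝔸 : Type*} [Ring 𝔸] [Algebra ℂ 𝔸]
    [TopologicalSpace 𝔸] [IsTopologicalRing 𝔸] [ContinuousSMul ℂ 𝔸] [T2Space 𝔸]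
    {N : 𝔸} {c : ℂ} (hc : c ≠ 0) (hN : N ^ 2 = -c ^ 2 • (1 : 𝔸)) (z : ℂ) :
    NormedSpace.exp (z • N) = cos (c * z) • (1 : 𝔸) + (sin (c * z) / c) • N := by
  have even_pow (k : ℕ) : (z • N) ^ (2 * k) = ((-1) ^ k * (c * z) ^ (2 * k)) • (1 : 𝔸) := by
    rw [smul_pow, pow_mul N, hN, smul_pow, one_pow, smul_smul]
    ring_nf
  have odd_pow (k : ℕ) :
      (z • N) ^ (2 * k + 1) = ((-1) ^ k * (c * z) ^ (2 * k + 1) / c) • N := by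
    rw [pow_succ, even_pow, smul_mul_assoc, one_mul, smul_smul]
    congr 1
    field_simp
    ring
  have hcos := (hasSum_cos (c * z)).smul_const (1 : 𝔸)
  have hsin := ((hasSum_sin (c * z)).div_const c).smul_const N
  rw [exp_eq_tsum ℂ]
  refine (HasSum.even_add_odd ?_ ?_).tsum_eq
  · convert hcos using 2 with k
    rw [even_pow, smul_smul]
    ring_nf
  · convert hsin using 2 with k
    rw [odd_pow, smul_smul]
    ring_nf

theorem NormedSpace.exp_smul_one_add {𝔸 : Type*} [NormedRing 𝔸] [NormedAlgebra ℂ 𝔸]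
    [CompleteSpace 𝔸] (a : ℂ) (x : 𝔸) :
    NormedSpace.exp (a • (1 : 𝔸) + x) = Complex.exp a • NormedSpace.exp x := by
  let +nondep : NormedAlgebra ℚ 𝔸 := .restrictScalars ℚ ℂ 𝔸
  rw [← Algebra.algebraMap_eq_smul_one, exp_add_of_commute (Algebra.commutes a x),
    ← algebraMap_exp_comm, ← exp_eq_exp_ℂ, Algebra.smul_def]

theorem Matrix.exp_smul_one_add {n : Type*} [Fintype n] [DecidableEq n] (a : ℂ)
    (A : Matrix n n ℂ) :
    NormedSpace.exp (a • (1 : Matrix n n ℂ) + A) = Complex.exp a • NormedSpace.exp A := by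
  -- `exp` only depends on the topology, so any Banach algebra norm on matrices will do.
  open scoped Norms.Operator in exact NormedSpace.exp_smul_one_add a A

/-- **Matrix exponential of the e-beam companion matrix.**
Let `ω` be real and `f > 0`, and let `C_B = [[0, 1], [ω² - f², 2iω]]`.  Then for every
complex `z`,
`exp (z • C_B) = (e^{iωz}/f) • [[f cos(fz) - iω sin(fz), sin(fz)],
                                [(ω² - f²) sin(fz), f cos(fz) + iω sin(fz)]]`. -/
theorem matrix_exp_companion (ω f : ℝ) (hf : 0 < f)
    (CB : Matrix (Fin 2) (Fin 2) ℂ)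
    (hCB : CB = !![0, 1; (ω : ℂ) ^ 2 - (f : ℂ) ^ 2, 2 * Complex.I * ω]) :
    ∀ z : ℂ,
      NormedSpace.exp (z • CB) =
        (Complex.exp (Complex.I * ω * z) / (f : ℂ)) •
          !![(f : ℂ) * Complex.cos (f * z) - Complex.I * ω * Complex.sin (f * z),
             Complex.sin (f * z);
             ((ω : ℂ) ^ 2 - (f : ℂ) ^ 2) * Complex.sin (f * z),
             (f : ℂ) * Complex.cos (f * z) + Complex.I * ω * Complex.sin (f * z)] := by
  intro z
  have hf0 : (f : ℂ) ≠ 0 := ofReal_ne_zero.2 hf.ne'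
  set N : Matrix (Fin 2) (Fin 2) ℂ := !![-(I * ω), 1; (ω : ℂ) ^ 2 - (f : ℂ) ^ 2, I * ω]
  have hN : N ^ 2 = -(f : ℂ) ^ 2 • (1 : Matrix (Fin 2) (Fin 2) ℂ) := by
    ext i j
    fin_cases i <;> fin_cases j <;> simp [N, sq, Matrix.mul_apply] <;> ring_nf <;> simp [I_sq]
  have hsplit : z • CB = (I * ω * z) • (1 : Matrix (Fin 2) (Fin 2) ℂ) + z • N := by
    ext i j
    fin_cases i <;> fin_cases j <;> simp [hCB, N] <;> ring
  rw [hsplit, Matrix.exp_smul_one_add, NormedSpace.exp_smul_of_sq_eq_neg_sq_smul_one hf0 hN]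
  ext i j
  fin_cases i <;> fin_cases j <;> simp [N] <;> field_simp
  ring
end

section
/- Let ω be real, 0 < f < π, and let σ ∈ {+1, −1}. Define the 2×2 complex matrix T_σ = e^{iω}·[[cos f − iω·(sin f)/f, (sin f)/f], [((sin f)/f)·ω² + 2iω(cos f + σ) − f·(1 + σ·cos f)²/sin f, iω·(sin f)/f − cos f − 2σ]]. Then (T_σ + σ·e^{iω}·I)² = 0 while T_σ + σ·e^{iω}·I ≠ 0; consequently T_σ has the single degenerate eigenvalue −σ·e^{iω} of algebraic multiplicity 2 and geometric multiplicity 1, i.e. its Jordan canonical form is a single 2×2 Jordan block with eigenvalue −σ·e^{iω}. -/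
/-!
At an exceptional point of degeneracy, `T_σ + σ e^{iω} I = e^{iω} N` with `N` traceless and,
because `σ² = 1`, of determinant zero; by Cayley–Hamilton `N² = 0`. Its `(0, 1)` entry
`sin f / f` is nonzero, so `N` is a nonzero nilpotent `2 × 2` matrix, i.e. a single Jordan
block. The characteristic polynomial, the eigenvalue and the kernel dimension are then
consequences of nilpotency alone.
-/

open Complex

namespace Matrix

open Polynomial in
theorem charpoly_eq_X_pow_of_isNilpotent {R n : Type*} [CommRing R] [IsDomain R]
    [Fintype n] [DecidableEq n] {M : Matrix n n R} (hM : IsNilpotent M) :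
    M.charpoly = X ^ Fintype.card n :=
  sub_eq_zero.mp (isNilpotent_charpoly_sub_pow_of_isNilpotent hM).eq_zero

theorem det_smul_one_sub_of_isNilpotent_add {R n : Type*} [CommRing R] [IsDomain R]
    [Fintype n] [DecidableEq n] {M : Matrix n n R} {μ : R} (hM : IsNilpotent (M + μ • 1))
    (s : R) : (s • 1 - M).det = (s + μ) ^ Fintype.card n := by
  have h := (M + μ • 1).eval_charpoly (s + μ)
  rw [charpoly_eq_X_pow_of_isNilpotent hM, Polynomial.eval_X_pow, scalar_apply,
    ← smul_one_eq_diagonal, add_smul, add_sub_add_right_eq_sub] at h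
  exact h.symm

theorem exists_mulVec_eq_smul_iff_det_eq_zero {R n : Type*} [CommRing R] [IsDomain R]
    [Fintype n] [DecidableEq n] (M : Matrix n n R) (s : R) :
    (∃ v ≠ 0, M *ᵥ v = s • v) ↔ (s • 1 - M).det = 0 := by
  rw [← exists_mulVec_eq_zero_iff]
  simp only [sub_mulVec, smul_mulVec, one_mulVec, sub_eq_zero, eq_comm]

theorem sq_fin_two_traceless {R : Type*} [CommRing R] (a b c : R) :
    !![a, b; c, -a] ^ 2 = (a ^ 2 + b * c) • (1 : Matrix (Fin 2) (Fin 2) R) := by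
  ext i j
  fin_cases i <;> fin_cases j <;> simp [sq] <;> ring

end Matrix

theorem LinearMap.finrank_ker_eq_one_of_comp_self_eq_zero {K V : Type*} [Field K]
    [AddCommGroup V] [Module K V] [FiniteDimensional K V] (hV : Module.finrank K V = 2)
    {f : V →ₗ[K] V} (hff : f ∘ₗ f = 0) (hf : f ≠ 0) :
    Module.finrank K (LinearMap.ker f) = 1 := by
  have hsum := f.finrank_range_add_finrank_ker
  have hle : Module.finrank K (LinearMap.range f) ≤ Module.finrank K (LinearMap.ker f) :=
    Submodule.finrank_mono (LinearMap.range_le_ker_iff.mpr hff)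
  have hpos : Module.finrank K (LinearMap.range f) ≠ 0 := by
    rwa [Ne, Submodule.finrank_eq_zero, LinearMap.range_eq_bot]
  omega

theorem Matrix.finrank_ker_mulVecLin_eq_one_of_sq_eq_zero {K : Type*} [Field K]
    {N : Matrix (Fin 2) (Fin 2) K} (hN : N ^ 2 = 0) (hN0 : N ≠ 0) :
    Module.finrank K (LinearMap.ker N.mulVecLin) = 1 := by
  refine LinearMap.finrank_ker_eq_one_of_comp_self_eq_zero (by simp) ?_ ?_
  · rw [← mulVecLin_mul, ← sq, hN, mulVecLin_zero]
  · rwa [Ne, ← toLin'_apply', map_eq_zero_iff _ toLin'.injective]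

theorem mck_sq_add_mul_eq_zero (ω F σ S C : ℂ) (hσ : σ ^ 2 = 1) (hS : S ≠ 0)
    (hF : F ≠ 0) :
    (C + σ - I * ω * (S / F)) ^ 2
      + S / F * (S / F * ω ^ 2 + 2 * I * ω * (C + σ) - F * (1 + σ * C) ^ 2 / S) = 0 := by
  field_simp
  linear_combination (F ^ 2 - F ^ 2 * C ^ 2) * hσ + (ω ^ 2 * S ^ 2) * I_sq

/-- **Exceptional point of degeneracy of the MCK monodromy matrix.**
Let `ω` be real, `0 < f < π`, `σ = ±1`, and let `T_σ` be the MCK monodromy matrix at an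
EPD.  Then `(T_σ + σ e^{iω} I)² = 0` while `T_σ + σ e^{iω} I ≠ 0`; consequently `T_σ`
has the single degenerate eigenvalue `-σ e^{iω}` of algebraic multiplicity `2`
(`det (s I - T_σ) = (s + σ e^{iω})²`) and geometric multiplicity `1`, i.e. its Jordan
canonical form is a single `2×2` Jordan block with eigenvalue `-σ e^{iω}`. -/
theorem mck_epd_jordan_block (ω f σ : ℝ) (hf : 0 < f) (hfπ : f < Real.pi)
    (hσ : σ = 1 ∨ σ = -1)
    (T : Matrix (Fin 2) (Fin 2) ℂ)
    (hT : T = Complex.exp (Complex.I * ω) •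
      !![(Real.cos f : ℂ) - Complex.I * ω * (Real.sin f / f),
         ((Real.sin f / f : ℝ) : ℂ);
         ((Real.sin f / f : ℝ) : ℂ) * (ω : ℂ) ^ 2 +
           2 * Complex.I * ω * ((Real.cos f : ℂ) + σ) -
           (f : ℂ) * ((1 : ℂ) + σ * Real.cos f) ^ 2 / (Real.sin f : ℂ),
         Complex.I * ω * (Real.sin f / f) - Real.cos f - 2 * σ]) :
    ((T + ((σ : ℂ) * Complex.exp (Complex.I * ω)) • (1 : Matrix (Fin 2) (Fin 2) ℂ)) ^ 2
        = 0) ∧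
    (T + ((σ : ℂ) * Complex.exp (Complex.I * ω)) • (1 : Matrix (Fin 2) (Fin 2) ℂ) ≠ 0) ∧
    (∀ s : ℂ,
      Matrix.det (s • (1 : Matrix (Fin 2) (Fin 2) ℂ) - T) =
        (s + (σ : ℂ) * Complex.exp (Complex.I * ω)) ^ 2) ∧
    (∀ s : ℂ,
      (∃ v : Fin 2 → ℂ, v ≠ 0 ∧ T.mulVec v = s • v) ↔
        s = -((σ : ℂ) * Complex.exp (Complex.I * ω))) ∧
    Module.finrank ℂ
        (LinearMap.ker
          (Matrix.mulVecLin
            (T + ((σ : ℂ) * Complex.exp (Complex.I * ω)) •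
              (1 : Matrix (Fin 2) (Fin 2) ℂ)))) = 1 := by
  set E := exp (I * ω)
  have hσ2 : (σ : ℂ) ^ 2 = 1 := by rcases hσ with rfl | rfl <;> norm_num
  have hS : (Real.sin f : ℂ) ≠ 0 :=
    ofReal_ne_zero.mpr (Real.sin_pos_of_pos_of_lt_pi hf hfπ).ne'
  have hF : (f : ℂ) ≠ 0 := ofReal_ne_zero.mpr hf.ne'
  set b : ℂ := Real.sin f / f
  set a : ℂ := Real.cos f + σ - I * ω * b
  set c : ℂ :=
    b * ω ^ 2 + 2 * I * ω * (Real.cos f + σ) - f * (1 + σ * Real.cos f) ^ 2 / Real.sin f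
  have hshift :
      T + ((σ : ℂ) * E) • (1 : Matrix (Fin 2) (Fin 2) ℂ) = E • !![a, b; c, -a] := by
    subst hT
    ext i j
    fin_cases i <;> fin_cases j <;> simp [a, b, c] <;> ring
  have hsq : (T + ((σ : ℂ) * E) • (1 : Matrix (Fin 2) (Fin 2) ℂ)) ^ 2 = 0 := by
    rw [hshift, smul_pow, Matrix.sq_fin_two_traceless,
      mck_sq_add_mul_eq_zero ω f σ _ _ hσ2 hS hF, zero_smul, smul_zero]
  have hne : T + ((σ : ℂ) * E) • (1 : Matrix (Fin 2) (Fin 2) ℂ) ≠ 0 := by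
    rw [hshift]
    exact smul_ne_zero (exp_ne_zero _) fun h => div_ne_zero hS hF (congrFun (congrFun h 0) 1)
  have hdet := Matrix.det_smul_one_sub_of_isNilpotent_add ⟨2, hsq⟩
  refine ⟨hsq, hne, hdet, fun s => ?_,
    Matrix.finrank_ker_mulVecLin_eq_one_of_sq_eq_zero hsq hne⟩
  rw [Matrix.exists_mulVec_eq_smul_iff_det_eq_zero, hdet, Fintype.card_fin,
    pow_eq_zero_iff two_ne_zero, add_eq_zero_iff_eq_neg]
end
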